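/- arXiv:1805.12080 — 6 statements merged into one kernel-verified Lean document; each statement's English description precedes it below -/
import Mathlib

section
/- Let m ≥ 2 and, for 2 ≤ i ≤ m, define φ_i = P̃_i − P̃_0 if i is even and φ_i = P̃_i − P̃_1 if i is odd. Then φ_2, …, φ_m form a basis of the (m−1)-dimensional real vector space of polynomials of degree at most m that vanish at 0 and at 1. -/
open Polynomial

/-- The `n`-th Legendre polynomial, via Rodrigues' formula:
`P_n = (1/(2ⁿ n!)) dⁿ/dtⁿ (t² − 1)ⁿ`. -/
noncomputable def legendrePoly (n : ℕ) : Polynomial ℝ :=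
  Polynomial.C (1 / ((2:ℝ) ^ n * n.factorial)) *
    (Polynomial.derivative^[n] ((Polynomial.X ^ 2 - 1) ^ n))

/-- The `n`-th shifted Legendre polynomial: `P̃_n(x) = P_n(2x − 1)`. -/
noncomputable def shiftedLegendrePoly (n : ℕ) : Polynomial ℝ :=
  (legendrePoly n).comp (2 * Polynomial.X - 1)

/-- The basis polynomials `φ_i = P̃_i − P̃_0` for even `i`, `φ_i = P̃_i − P̃_1` for odd `i`. -/
noncomputable def phiPoly (i : ℕ) : Polynomial ℝ :=
  if Even i then shiftedLegendrePoly i - shiftedLegendrePoly 0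
  else shiftedLegendrePoly i - shiftedLegendrePoly 1

/-- The space of real polynomials of degree at most `m` vanishing at `0` and at `1`. -/
noncomputable def bratuSpace (m : ℕ) : Submodule ℝ (Polynomial ℝ) :=
  Polynomial.degreeLE ℝ (m : WithBot ℕ) ⊓ LinearMap.ker (Polynomial.leval (0:ℝ)) ⊓
    LinearMap.ker (Polynomial.leval (1:ℝ))

lemma rodrigues_natDegree_base (n : ℕ) :
    (((X:Polynomial ℝ) ^ 2 - 1) ^ n).natDegree = n * 2 := by
  rw [natDegree_pow]
  congr 1
  have : ((X:Polynomial ℝ)^2 - C 1).natDegree = 2 := natDegree_X_pow_sub_C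
  simpa using this

lemma rodrigues_monic (n : ℕ) : (((X:Polynomial ℝ) ^ 2 - 1) ^ n).Monic := by
  apply Polynomial.Monic.pow
  have := monic_X_pow_sub_C (R := ℝ) (1:ℝ) (two_ne_zero)
  simpa using this

lemma rodrigues_coeff (n : ℕ) :
    (Polynomial.derivative^[n] (((X:Polynomial ℝ) ^ 2 - 1) ^ n)).coeff n
      = ((n + n).descFactorial n : ℝ) := by
  rw [coeff_iterate_derivative]
  have h : (((X:Polynomial ℝ) ^ 2 - 1) ^ n).coeff (n + n) = 1 := by
    have := (rodrigues_monic n).coeff_natDegree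
    rwa [rodrigues_natDegree_base, Nat.mul_comm, two_mul] at this
  rw [h, nsmul_eq_mul, mul_one]

lemma rodrigues_natDegree (n : ℕ) :
    (Polynomial.derivative^[n] (((X:Polynomial ℝ) ^ 2 - 1) ^ n)).natDegree = n := by
  apply le_antisymm
  · have := natDegree_iterate_derivative (((X:Polynomial ℝ) ^ 2 - 1) ^ n) n
    rw [rodrigues_natDegree_base] at this
    omega
  · apply le_natDegree_of_ne_zero
    rw [rodrigues_coeff]
    have : (n + n).descFactorial n ≠ 0 := by
      rw [Ne, Nat.descFactorial_eq_zero_iff_lt]; omega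
    exact_mod_cast this

lemma legendre_const_ne (n : ℕ) : (1 / ((2:ℝ) ^ n * n.factorial)) ≠ 0 := by
  have h1 : ((n.factorial : ℝ)) ≠ 0 := by exact_mod_cast n.factorial_ne_zero
  positivity

lemma legendre_natDegree (n : ℕ) : (legendrePoly n).natDegree = n := by
  rw [legendrePoly, natDegree_C_mul (legendre_const_ne n), rodrigues_natDegree]

lemma X_sq_fact : ((X:Polynomial ℝ) ^ 2 - 1) = (X - C 1) * (X + C 1) := by
  simp only [C_1]; ring

lemma rodrigues_eval_one (n : ℕ) :
    (Polynomial.derivative^[n] (((X:Polynomial ℝ) ^ 2 - 1) ^ n)).eval 1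
      = (2:ℝ) ^ n * (n.factorial:ℝ) := by
  rw [X_sq_fact, mul_pow, iterate_derivative_mul, eval_finset_sum]
  rw [Finset.sum_eq_single 0]
  · rw [Nat.sub_zero, iterate_derivative_X_sub_pow_self]
    simp only [Function.iterate_zero_apply, Nat.choose_zero_right, one_smul, eval_mul,
      eval_natCast, eval_pow, eval_add, eval_X, eval_C]
    norm_num
    ring
  · intro k hk hk0
    rw [Finset.mem_range] at hk
    have hkn : k ≤ n := Nat.lt_succ_iff.mp hk
    rw [iterate_derivative_X_sub_pow, Nat.sub_sub_self hkn]
    simp [zero_pow hk0]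
  · intro h
    exact absurd (Finset.mem_range.mpr n.succ_pos) h

lemma rodrigues_eval_neg_one (n : ℕ) :
    (Polynomial.derivative^[n] (((X:Polynomial ℝ) ^ 2 - 1) ^ n)).eval (-1)
      = (-2:ℝ) ^ n * (n.factorial:ℝ) := by
  rw [X_sq_fact, mul_pow, iterate_derivative_mul, eval_finset_sum]
  rw [Finset.sum_eq_single n]
  · rw [Nat.sub_self]
    have : Polynomial.derivative^[n] (((X:Polynomial ℝ) + C 1) ^ n) = n.factorial := by
      rw [iterate_derivative_X_add_pow, Nat.sub_self, pow_zero, Nat.descFactorial_self,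
        nsmul_eq_mul, mul_one]
    rw [this]
    simp only [Function.iterate_zero_apply, Nat.choose_self, one_smul, eval_mul,
      eval_natCast, eval_pow, eval_sub, eval_X, eval_C]
    norm_num
  · intro k hk hkn
    rw [Finset.mem_range] at hk
    have hkn' : k ≤ n := Nat.lt_succ_iff.mp hk
    rw [iterate_derivative_X_add_pow]
    have hnk : n - k ≠ 0 := by omega
    simp [zero_pow hnk]
  · intro h
    exact absurd (Finset.mem_range.mpr n.lt_succ_self) h

lemma legendre_eval_one (n : ℕ) : (legendrePoly n).eval 1 = 1 := by
  rw [legendrePoly, eval_mul, eval_C, rodrigues_eval_one]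
  have h1 : ((n.factorial : ℝ)) ≠ 0 := by exact_mod_cast n.factorial_ne_zero
  have h2 : ((2:ℝ) ^ n) ≠ 0 := by positivity
  field_simp

lemma legendre_eval_neg_one (n : ℕ) : (legendrePoly n).eval (-1) = (-1) ^ n := by
  rw [legendrePoly, eval_mul, eval_C, rodrigues_eval_neg_one]
  have h1 : ((n.factorial : ℝ)) ≠ 0 := by exact_mod_cast n.factorial_ne_zero
  have h2 : ((2:ℝ) ^ n) ≠ 0 := by positivity
  rw [neg_pow (2:ℝ)]
  field_simp

lemma natDegree_twoXsubOne : ((2:Polynomial ℝ) * X - 1).natDegree = 1 := by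
  compute_degree!

lemma shifted_natDegree (n : ℕ) : (shiftedLegendrePoly n).natDegree = n := by
  rw [shiftedLegendrePoly, natDegree_comp, legendre_natDegree, natDegree_twoXsubOne, mul_one]

lemma shifted_eval_one (n : ℕ) : (shiftedLegendrePoly n).eval 1 = 1 := by
  rw [shiftedLegendrePoly, eval_comp]
  norm_num [legendre_eval_one]

lemma shifted_eval_zero (n : ℕ) : (shiftedLegendrePoly n).eval 0 = (-1)^n := by
  rw [shiftedLegendrePoly, eval_comp]
  norm_num [legendre_eval_neg_one]

lemma phi_natDegree {i : ℕ} (hi : 2 ≤ i) : (phiPoly i).natDegree = i := by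
  rw [phiPoly]
  split_ifs with h
  · rw [natDegree_sub_eq_left_of_natDegree_lt, shifted_natDegree]
    rw [shifted_natDegree, shifted_natDegree]; omega
  · rw [natDegree_sub_eq_left_of_natDegree_lt, shifted_natDegree]
    rw [shifted_natDegree, shifted_natDegree]; omega

lemma phi_ne_zero {i : ℕ} (hi : 2 ≤ i) : phiPoly i ≠ 0 := by
  intro h
  have := phi_natDegree hi
  rw [h, natDegree_zero] at this
  omega

lemma phi_eval_one (i : ℕ) : (phiPoly i).eval 1 = 0 := by
  rw [phiPoly]
  split_ifs with h <;> simp [eval_sub, shifted_eval_one]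

lemma phi_eval_zero (i : ℕ) : (phiPoly i).eval 0 = 0 := by
  rw [phiPoly]
  split_ifs with h
  · simp [eval_sub, shifted_eval_zero, h.neg_one_pow]
  · simp [eval_sub, shifted_eval_zero, (Nat.not_even_iff_odd.mp h).neg_one_pow]

lemma phi_mem {i m : ℕ} (h2 : 2 ≤ i) (him : i ≤ m) : phiPoly i ∈ bratuSpace m := by
  rw [bratuSpace, Submodule.mem_inf, Submodule.mem_inf]
  refine ⟨⟨?_, ?_⟩, ?_⟩
  · rw [mem_degreeLE]
    calc (phiPoly i).degree ≤ (phiPoly i).natDegree := degree_le_natDegree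
    _ ≤ (m : WithBot ℕ) := by
        rw [phi_natDegree h2]
        exact_mod_cast him
  · rw [LinearMap.mem_ker, leval_apply, phi_eval_zero]
  · rw [LinearMap.mem_ker, leval_apply, phi_eval_one]

lemma li_of_natDegree {ι : Type*} (f : ι → Polynomial ℝ) (h0 : ∀ i, f i ≠ 0)
    (hd : Function.Injective fun i => (f i).natDegree) : LinearIndependent ℝ f := by
  rw [linearIndependent_iff']
  intro s g hsum i hi
  by_contra hgi
  classical
  set t := s.filter (fun j => g j ≠ 0) with ht
  have hts : t.Nonempty := ⟨i, Finset.mem_filter.2 ⟨hi, hgi⟩⟩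
  obtain ⟨j, hjt, hjmax⟩ := t.exists_max_image (fun j => (f j).natDegree) hts
  have hj : g j ≠ 0 := (Finset.mem_filter.1 hjt).2
  have hcoeff := congrArg (fun p => p.coeff ((f j).natDegree)) hsum
  simp only [Polynomial.finset_sum_coeff, Polynomial.coeff_smul, Polynomial.coeff_zero] at hcoeff
  rw [Finset.sum_eq_single j] at hcoeff
  · rw [Polynomial.coeff_natDegree, smul_eq_mul] at hcoeff
    exact hj ((mul_eq_zero.1 hcoeff).resolve_right (leadingCoeff_ne_zero.mpr (h0 j)))
  · intro k hk hkj
    by_cases hgk : g k = 0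
    · simp [hgk]
    · have hk' : k ∈ t := Finset.mem_filter.2 ⟨hk, hgk⟩
      have hlt : (f k).natDegree < (f j).natDegree :=
        lt_of_le_of_ne (hjmax k hk') (fun h => hkj (hd h))
      simp [Polynomial.coeff_eq_zero_of_natDegree_lt hlt]
  · intro hjs
    exact absurd (Finset.mem_filter.1 hjt).1 hjs

lemma degreeLE_fd (m : ℕ) : FiniteDimensional ℝ (degreeLE ℝ (m : WithBot ℕ)) := by
  rw [← degreeLT_succ_eq_degreeLE]
  exact (degreeLTEquiv ℝ (m+1)).symm.finiteDimensional

lemma finrank_degreeLE (m : ℕ) : Module.finrank ℝ (degreeLE ℝ (m : WithBot ℕ)) = m + 1 := by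
  rw [← degreeLT_succ_eq_degreeLE, (degreeLTEquiv ℝ (m+1)).finrank_eq]
  simp

theorem stmt_5' (m : ℕ) (hm : 2 ≤ m) :
    LinearIndependent ℝ (fun i : (Finset.Icc 2 m) => phiPoly i) ∧
    Submodule.span ℝ (Set.range (fun i : (Finset.Icc 2 m) => phiPoly i)) = bratuSpace m ∧
    Module.finrank ℝ (bratuSpace m) = m - 1 := by
  classical
  have h2i : ∀ i : (Finset.Icc 2 m), 2 ≤ (i:ℕ) := fun i => (Finset.mem_Icc.mp i.2).1
  have hmem : ∀ i : (Finset.Icc 2 m), phiPoly i ∈ bratuSpace m := fun i =>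
    phi_mem (h2i i) (Finset.mem_Icc.mp i.2).2
  have hli : LinearIndependent ℝ (fun i : (Finset.Icc 2 m) => phiPoly i) := by
    apply li_of_natDegree
    · exact fun i => phi_ne_zero (h2i i)
    · intro a b hab
      simp only [phi_natDegree (h2i a), phi_natDegree (h2i b)] at hab
      exact Subtype.ext hab
  haveI : FiniteDimensional ℝ (degreeLE ℝ (m : WithBot ℕ)) := degreeLE_fd m
  have hVle : bratuSpace m ≤ degreeLE ℝ (m : WithBot ℕ) := le_trans inf_le_left inf_le_left
  haveI hVfd : FiniteDimensional ℝ (bratuSpace m) := Submodule.finiteDimensional_of_le hVle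
  have hcard : Fintype.card (Finset.Icc 2 m) = m - 1 := by
    simp [Nat.card_Icc]
  have hψ : LinearIndependent ℝ
      (fun i : (Finset.Icc 2 m) => (⟨phiPoly i, hmem i⟩ : bratuSpace m)) := by
    apply LinearIndependent.of_comp (bratuSpace m).subtype
    exact hli
  have hlow : m - 1 ≤ Module.finrank ℝ (bratuSpace m) := by
    have := hψ.fintype_card_le_finrank
    rwa [hcard] at this
  set W : Submodule ℝ (Polynomial ℝ) := Submodule.span ℝ {(1:Polynomial ℝ), X} with hW
  have hWli : LinearIndependent ℝ ![(1:Polynomial ℝ), X] := by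
    apply li_of_natDegree
    · intro i; fin_cases i <;> simp [X_ne_zero, one_ne_zero]
    · intro a b hab
      fin_cases a <;> fin_cases b <;> simp_all [natDegree_one, natDegree_X]
  have hrange : Set.range ![(1:Polynomial ℝ), X] = {(1:Polynomial ℝ), X} := by
    simp [Matrix.range_cons, Matrix.range_empty]
    exact Set.pair_comm _ _
  have hWfr : Module.finrank ℝ W = 2 := by
    rw [hW, ← hrange, finrank_span_eq_card hWli, Fintype.card_fin]
  have hWle : W ≤ degreeLE ℝ (m : WithBot ℕ) := by
    rw [hW, Submodule.span_le]
    rintro p hp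
    rcases hp with rfl | rfl
    · rw [SetLike.mem_coe, mem_degreeLE, degree_one]
      exact_mod_cast Nat.zero_le m
    · rw [SetLike.mem_coe, mem_degreeLE, degree_X]
      exact_mod_cast (by omega : 1 ≤ m)
  haveI : FiniteDimensional ℝ W := Submodule.finiteDimensional_of_le hWle
  have hdisj : bratuSpace m ⊓ W = ⊥ := by
    rw [eq_bot_iff]
    intro p hp
    rw [Submodule.mem_inf] at hp
    obtain ⟨hpV, hpW⟩ := hp
    rw [hW] at hpW
    obtain ⟨a, b, rfl⟩ := Submodule.mem_span_pair.mp hpW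
    rw [bratuSpace, Submodule.mem_inf, Submodule.mem_inf, LinearMap.mem_ker,
      LinearMap.mem_ker, leval_apply, leval_apply] at hpV
    obtain ⟨⟨-, h0⟩, h1⟩ := hpV
    simp only [eval_add, eval_smul, eval_one, eval_X, smul_eq_mul, mul_one,
      mul_zero, add_zero] at h0 h1
    have ha : a = 0 := h0
    have hb : b = 0 := by rw [ha] at h1; linarith
    simp [ha, hb, Submodule.mem_bot]
  have hsum := Submodule.finrank_sup_add_finrank_inf_eq (bratuSpace m) W
  rw [hdisj, hWfr] at hsum
  have hsup_le : Module.finrank ℝ ↥(bratuSpace m ⊔ W) ≤ m + 1 := by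
    have hle : bratuSpace m ⊔ W ≤ degreeLE ℝ (m:WithBot ℕ) := sup_le hVle hWle
    have := Submodule.finrank_mono hle
    rwa [finrank_degreeLE] at this
  rw [finrank_bot] at hsum
  have hfr : Module.finrank ℝ (bratuSpace m) = m - 1 := by omega
  have hspanle : Submodule.span ℝ (Set.range fun i : (Finset.Icc 2 m) => phiPoly i)
      ≤ bratuSpace m := by
    rw [Submodule.span_le]
    rintro p ⟨i, rfl⟩
    exact hmem i
  have hspanfr : Module.finrank ℝ
      (Submodule.span ℝ (Set.range fun i : (Finset.Icc 2 m) => phiPoly i)) = m - 1 := by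
    rw [finrank_span_eq_card hli, hcard]
  have hspan := Submodule.eq_of_le_of_finrank_le hspanle (by rw [hfr, hspanfr])
  exact ⟨hli, hspan, hfr⟩

/-- for `m ≥ 2`, the family `φ_2, …, φ_m` is a basis (a linearly
independent spanning family) of the `(m−1)`-dimensional space of polynomials of
degree at most `m` vanishing at `0` and `1`. -/
theorem stmt_5 (m : ℕ) (hm : 2 ≤ m) :
    LinearIndependent ℝ (fun i : (Finset.Icc 2 m) => phiPoly i) ∧
    Submodule.span ℝ (Set.range (fun i : (Finset.Icc 2 m) => phiPoly i)) = bratuSpace m ∧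
    Module.finrank ℝ (bratuSpace m) = m - 1 :=
  stmt_5' m hm
end

section
/- Let 1 < α < 2, let m ≥ 2, let y be a real polynomial of degree at most m with y(0) = y(1) = 0, and let x_0, …, x_{m−2} be m−1 pairwise distinct points in the open interval (0,1). If the Caputo derivative ᶜD^α y(x_i) = (1/Γ(2−α)) ∫₀^{x_i} (x_i − r)^{1−α} y''(r) dr equals 0 for every i = 0, …, m−2, then y is the zero polynomial. -/
/-!
Substituting `r = x s` shows `∫₀ˣ (x - r)^β r^k dr = x^(β+1+k) B(k+1, β+1)`. Hence
`∫₀ˣ (x - r)^(1-α) y''(r) dr = x^(2-α) q(x)`, where `q` is `y''` with its `k`-th coefficient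
multiplied by the positive number `B(k+1, 2-α)`. The `m - 1` distinct nodes are roots of `q`, whose
degree is at most `m - 2`, so `q = 0` and therefore `y'' = 0`. A polynomial of degree at most one
vanishing at `0` and `1` is zero.
-/

open MeasureTheory Polynomial

theorem Polynomial.degree_iterate_derivative_lt {R : Type*} [Semiring R] {p : R[X]} {m : ℕ}
    (k : ℕ) (hp : p.natDegree ≤ m) : (derivative^[k] p).degree < ↑(m + 1 - k) := by
  by_cases hk : p.natDegree < k
  · simp [iterate_derivative_eq_zero hk]
  · calc (derivative^[k] p).degree ≤ ↑(derivative^[k] p).natDegree := degree_le_natDegree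
      _ < ↑(m + 1 - k) := by
        have := natDegree_iterate_derivative p k
        exact_mod_cast (by omega)

theorem Polynomial.eq_zero_of_derivative_derivative_eq_zero {K : Type*} [Field K] [CharZero K]
    {p : K[X]} (hp : derivative (derivative p) = 0) {a b : K} (hab : a ≠ b)
    (ha : p.eval a = 0) (hb : p.eval b = 0) : p = 0 := by
  have hdeg : p.natDegree - 1 = 0 := by
    rw [← natDegree_derivative]
    exact derivative_eq_zero.mp hp
  classical
  refine eq_zero_of_natDegree_lt_card_of_eval_eq_zero' p {a, b} ?_ ?_
  · simp [ha, hb]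
  · rw [Finset.card_pair hab]
    omega

/-- The Beta value `B(k + 1, β + 1)`. -/
noncomputable def betaMoment (β : ℝ) (k : ℕ) : ℝ :=
  ∫ s in (0:ℝ)..1, (1 - s) ^ β * s ^ k

theorem intervalIntegrable_rpow_sub_mul_pow {β : ℝ} (hβ : -1 < β) (x : ℝ) (k : ℕ) :
    IntervalIntegrable (fun r => (x - r) ^ β * r ^ k) volume 0 x := by
  have h :=
    ((intervalIntegral.intervalIntegrable_rpow' (a := 0) (b := x) hβ).comp_sub_left x).symm
  rw [sub_zero, sub_self] at h
  exact h.mul_continuousOn (by fun_prop)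

theorem betaMoment_pos {β : ℝ} (hβ : -1 < β) (k : ℕ) : 0 < betaMoment β k :=
  intervalIntegral.intervalIntegral_pos_of_pos_on (intervalIntegrable_rpow_sub_mul_pow hβ 1 k)
    (fun s hs => mul_pos (Real.rpow_pos_of_pos (by linarith [hs.2]) _) (pow_pos hs.1 k)) one_pos

theorem integral_rpow_sub_mul_pow (β : ℝ) {x : ℝ} (hx : 0 < x) (k : ℕ) :
    ∫ r in (0:ℝ)..x, (x - r) ^ β * r ^ k = x ^ (β + 1) * x ^ k * betaMoment β k := by
  have hscale := intervalIntegral.integral_comp_mul_left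
    (a := (0:ℝ)) (b := 1) (fun r => (x - r) ^ β * r ^ k) hx.ne'
  rw [mul_zero, mul_one, smul_eq_mul, eq_inv_mul_iff_mul_eq₀ hx.ne'] at hscale
  rw [← hscale, betaMoment, ← intervalIntegral.integral_const_mul,
    ← intervalIntegral.integral_const_mul]
  refine intervalIntegral.integral_congr fun s hs => ?_
  rw [Set.uIcc_of_le zero_le_one] at hs
  rw [show x - x * s = x * (1 - s) by ring, Real.mul_rpow hx.le (by linarith [hs.2]), mul_pow,
    Real.rpow_add_one hx.ne']
  ring

noncomputable def betaScale (β : ℝ) (p : ℝ[X]) : ℝ[X] :=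
  ∑ k ∈ Finset.range (p.natDegree + 1), monomial k (p.coeff k * betaMoment β k)

theorem coeff_betaScale (β : ℝ) (p : ℝ[X]) (k : ℕ) :
    (betaScale β p).coeff k = p.coeff k * betaMoment β k := by
  rw [betaScale, finsetSum_coeff]
  simp only [coeff_monomial]
  rw [Finset.sum_ite_eq']
  split_ifs with hk
  · rfl
  · rw [coeff_eq_zero_of_natDegree_lt (by simpa [Nat.lt_succ_iff] using hk), zero_mul]

theorem degree_betaScale_le (β : ℝ) (p : ℝ[X]) : (betaScale β p).degree ≤ p.degree :=
  (degree_le_iff_coeff_zero _ _).mpr fun k hk => by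
    rw [coeff_betaScale, coeff_eq_zero_of_degree_lt hk, zero_mul]

theorem integral_rpow_sub_mul_eval {β : ℝ} (hβ : -1 < β) {x : ℝ} (hx : 0 < x) (p : ℝ[X]) :
    ∫ r in (0:ℝ)..x, (x - r) ^ β * p.eval r = x ^ (β + 1) * (betaScale β p).eval x := by
  have hterm (k : ℕ) :
      IntervalIntegrable (fun r => p.coeff k * ((x - r) ^ β * r ^ k)) volume 0 x :=
    (intervalIntegrable_rpow_sub_mul_pow hβ x k).const_mul _
  calc ∫ r in (0:ℝ)..x, (x - r) ^ β * p.eval r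
      = ∑ k ∈ Finset.range (p.natDegree + 1),
          ∫ r in (0:ℝ)..x, p.coeff k * ((x - r) ^ β * r ^ k) := by
        rw [← intervalIntegral.integral_finsetSum fun k _ => hterm k]
        refine intervalIntegral.integral_congr fun r _ => ?_
        simp only [eval_eq_sum_range, Finset.mul_sum]
        exact Finset.sum_congr rfl fun k _ => by ring
    _ = x ^ (β + 1) * (betaScale β p).eval x := by
        simp only [intervalIntegral.integral_const_mul, integral_rpow_sub_mul_pow β hx, betaScale,
          eval_finsetSum, eval_monomial, Finset.mul_sum]
        exact Finset.sum_congr rfl fun k _ => by ring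

theorem eq_zero_of_integral_rpow_sub_mul_eval_eq_zero {β : ℝ} (hβ : -1 < β) {ι : Type*}
    [Fintype ι] {x : ι → ℝ} (hinj : Function.Injective x) (hpos : ∀ i, 0 < x i) {p : ℝ[X]}
    (hp : p.degree < Fintype.card ι)
    (hzero : ∀ i, ∫ r in (0:ℝ)..x i, (x i - r) ^ β * p.eval r = 0) : p = 0 := by
  have hroots : ∀ i ∈ Finset.univ, (betaScale β p).eval (x i) = 0 := fun i _ => by
    have h := hzero i
    rw [integral_rpow_sub_mul_eval hβ (hpos i)] at h
    exact (mul_eq_zero.mp h).resolve_left (Real.rpow_pos_of_pos (hpos i) _).ne'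
  have hscale : betaScale β p = 0 :=
    eq_zero_of_degree_lt_of_eval_index_eq_zero _ hinj.injOn
      ((degree_betaScale_le β p).trans_lt hp) hroots
  ext k
  have hk := coeff_betaScale β p k
  rw [hscale, coeff_zero, eq_comm, mul_eq_zero] at hk
  exact hk.resolve_right (betaMoment_pos hβ k).ne'

theorem stmt_7_general (α : ℝ) (hα2 : α < 2)
    (m : ℕ) (y : Polynomial ℝ)
    (hdeg : y.natDegree ≤ m) (h0 : y.eval 0 = 0) (h1 : y.eval 1 = 0)
    (x : Fin (m - 1) → ℝ) (hinj : Function.Injective x)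
    (hmem : ∀ i, x i ∈ Set.Ioo (0:ℝ) 1)
    (hzero : ∀ i, (1 / Real.Gamma (2 - α)) *
      (∫ r in (0:ℝ)..(x i), (x i - r) ^ (1 - α) *
        (Polynomial.derivative (Polynomial.derivative y)).eval r) = 0) :
    y = 0 := by
  have hΓ : Real.Gamma (2 - α) ≠ 0 := (Real.Gamma_pos_of_pos (by linarith)).ne'
  have hdeg₂ : (derivative (derivative y)).degree < Fintype.card (Fin (m - 1)) := by
    rw [Fintype.card_fin, show m - 1 = m + 1 - 2 by omega]
    exact degree_iterate_derivative_lt 2 hdeg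
  have hy'' : derivative (derivative y) = 0 :=
    eq_zero_of_integral_rpow_sub_mul_eval_eq_zero (β := 1 - α) (by linarith) hinj
      (fun i => (hmem i).1) hdeg₂ fun i => by simpa [hΓ] using hzero i
  exact eq_zero_of_derivative_derivative_eq_zero hy'' zero_ne_one h0 h1

/-- Let `1 < α < 2`, `m ≥ 2`, let `y` be a real polynomial of degree at
most `m` with `y(0) = y(1) = 0`, and let `x_0, …, x_{m−2}` be `m−1` pairwise distinct
points in `(0,1)`. If the Caputo derivative
`ᶜD^α y(x_i) = (1/Γ(2−α)) ∫₀^{x_i} (x_i − r)^{1−α} y''(r) dr` vanishes for every `i`,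
then `y = 0`. -/
theorem stmt_7 (α : ℝ) (hα1 : 1 < α) (hα2 : α < 2)
    (m : ℕ) (hm : 2 ≤ m) (y : Polynomial ℝ)
    (hdeg : y.natDegree ≤ m) (h0 : y.eval 0 = 0) (h1 : y.eval 1 = 0)
    (x : Fin (m - 1) → ℝ) (hinj : Function.Injective x)
    (hmem : ∀ i, x i ∈ Set.Ioo (0:ℝ) 1)
    (hzero : ∀ i, (1 / Real.Gamma (2 - α)) *
      (∫ r in (0:ℝ)..(x i), (x i - r) ^ (1 - α) *
        (Polynomial.derivative (Polynomial.derivative y)).eval r) = 0) :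
    y = 0 :=
  stmt_7_general α hα2 m y hdeg h0 h1 x hinj hmem hzero
end

section
/- Let m ≥ 2, let H be the space of real polynomials of degree at most m vanishing at 0 and 1, with the L² inner product ⟨f,g⟩ = ∫₀¹ f(x) g(x) dx, and let x_0, …, x_{m−2} be m−1 pairwise distinct points in (0,1). For each i let ψ_i ∈ H be the Riesz representer of the linear functional y ↦ y''(x_i), i.e. the unique element of H with ⟨y, ψ_i⟩ = y''(x_i) for all y ∈ H. Then ψ_0, …, ψ_{m−2} form a basis of H (they are a complete system in H). -/
open Polynomial

/-- Double antiderivative of a polynomial. -/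
noncomputable def dblAnti (p : Polynomial ℝ) : Polynomial ℝ :=
  p.sum (fun k a => C (a / ((k+1)*(k+2))) * X^(k+2))

lemma dblAnti_deriv (p : Polynomial ℝ) :
    derivative (derivative (dblAnti p)) = p := by
  unfold dblAnti
  rw [Polynomial.sum, map_sum, map_sum]
  have : ∀ k ∈ p.support,
      derivative (derivative (C (p.coeff k / ((k+1)*(k+2))) * X^(k+2)))
        = C (p.coeff k) * X ^ k := by
    intro k _
    rw [derivative_C_mul_X_pow, derivative_C_mul_X_pow]
    congr 1
    congr 1
    push_cast
    field_simp
  rw [Finset.sum_congr rfl this]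
  conv_rhs => rw [← Polynomial.sum_C_mul_X_pow_eq p]
  rw [Polynomial.sum]

lemma dblAnti_natDegree (p : Polynomial ℝ) :
    (dblAnti p).natDegree ≤ p.natDegree + 2 := by
  unfold dblAnti
  rw [Polynomial.sum]
  apply Polynomial.natDegree_sum_le_of_forall_le
  intro k hk
  calc (C (p.coeff k / ((k+1)*(k+2))) * X^(k+2)).natDegree
      ≤ (C (p.coeff k / ((k+1)*(k+2)))).natDegree + (X^(k+2) : Polynomial ℝ).natDegree :=
        natDegree_mul_le
    _ ≤ p.natDegree + 2 := by
        simp [natDegree_C]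
        exact Polynomial.le_natDegree_of_mem_supp k hk

lemma mem_bratu_iff (m : ℕ) (y : Polynomial ℝ) :
    y ∈ bratuSpace m ↔ y.degree ≤ (m : WithBot ℕ) ∧ y.eval 0 = 0 ∧ y.eval 1 = 0 := by
  simp [bratuSpace, Submodule.mem_inf, Polynomial.mem_degreeLE, LinearMap.mem_ker,
    Polynomial.leval_apply, and_assoc]

lemma exists_bump (m : ℕ) (hm : 2 ≤ m) (x : Fin (m-1) → ℝ) (hinj : Function.Injective x)
    (i : Fin (m-1)) :
    ∃ y ∈ bratuSpace m, (∀ j, j ≠ i → eval (x j) (derivative (derivative y)) = 0) ∧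
      eval (x i) (derivative (derivative y)) ≠ 0 := by
  set p : Polynomial ℝ := ∏ j ∈ Finset.univ.erase i, (X - C (x j)) with hp
  set q := dblAnti p with hq
  set y := q - C (q.eval 0) - C (q.eval 1 - q.eval 0) * X with hy
  have hdd : derivative (derivative y) = p := by
    have h : derivative (derivative q) = p := dblAnti_deriv p
    rw [hy]
    simp [h]
  have hpdeg : p.natDegree ≤ m - 2 := by
    calc p.natDegree ≤ ∑ j ∈ Finset.univ.erase i, (X - C (x j)).natDegree :=
          Polynomial.natDegree_prod_le _ _
      _ = (Finset.univ.erase i).card := by simp [Polynomial.natDegree_X_sub_C]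
      _ ≤ m - 2 := by
          rw [Finset.card_erase_of_mem (Finset.mem_univ i)]
          simp
          omega
  have hqdeg : q.natDegree ≤ m := by
    have h := dblAnti_natDegree p
    rw [hq]
    omega
  refine ⟨y, ?_, ?_, ?_⟩
  · rw [mem_bratu_iff]
    refine ⟨?_, ?_, ?_⟩
    · have hyd : y.natDegree ≤ m := by
        rw [hy]
        refine le_trans (Polynomial.natDegree_sub_le _ _) ?_
        have h1 : (q - C (q.eval 0)).natDegree ≤ m :=
          le_trans (Polynomial.natDegree_sub_le _ _) (by simp [hqdeg])
        have h2 : (C (q.eval 1 - q.eval 0) * X).natDegree ≤ 1 := by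
          refine le_trans (Polynomial.natDegree_mul_le) ?_
          simp
        omega
      calc y.degree ≤ (y.natDegree : WithBot ℕ) := Polynomial.degree_le_natDegree
        _ ≤ (m : WithBot ℕ) := by exact_mod_cast hyd
    · rw [hy]; simp
    · rw [hy]; simp
  · intro j hj
    rw [hdd, hp, Polynomial.eval_prod]
    apply Finset.prod_eq_zero (Finset.mem_erase.mpr ⟨hj, Finset.mem_univ j⟩)
    simp
  · rw [hdd, hp, Polynomial.eval_prod]
    rw [Finset.prod_ne_zero_iff]
    intro j hj
    simp only [eval_sub, eval_X, eval_C, sub_ne_zero]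
    exact fun h => (Finset.mem_erase.mp hj).1 (hinj h.symm)

lemma bratu_eq_zero (m : ℕ) (hm : 2 ≤ m) (x : Fin (m-1) → ℝ) (hinj : Function.Injective x)
    (y : Polynomial ℝ) (hy : y ∈ bratuSpace m)
    (h0 : ∀ i, eval (x i) (derivative (derivative y)) = 0) : y = 0 := by
  rw [mem_bratu_iff] at hy
  obtain ⟨hdeg, he0, he1⟩ := hy
  have hnd : y.natDegree ≤ m := Polynomial.natDegree_le_iff_degree_le.mpr hdeg
  have hdd : derivative (derivative y) = 0 := by
    apply Polynomial.eq_zero_of_natDegree_lt_card_of_eval_eq_zero _ hinj h0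
    have h1 : (derivative (derivative y)).natDegree ≤ m - 2 := by
      have a1 := Polynomial.natDegree_derivative_le y
      have a2 := Polynomial.natDegree_derivative_le (derivative y)
      omega
    simp only [Fintype.card_fin]
    omega
  have h1 : (derivative y).natDegree = 0 :=
    Polynomial.natDegree_eq_zero_of_derivative_eq_zero hdd
  have h2 : y.degree ≤ 1 := by
    rw [Polynomial.degree_le_iff_coeff_zero]
    intro k hk
    have hk2 : 2 ≤ k := by
      have : (1:ℕ) < k := by exact_mod_cast hk
      omega
    have hc : (derivative y).coeff (k-1) = 0 :=
      Polynomial.coeff_eq_zero_of_natDegree_lt (by omega)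
    rw [Polynomial.coeff_derivative] at hc
    have hk1 : k - 1 + 1 = k := by omega
    rw [hk1] at hc
    rcases mul_eq_zero.mp hc with h | h
    · exact h
    · exfalso
      have : (0:ℝ) < ((k-1:ℕ):ℝ) + 1 := by positivity
      rw [h] at this
      exact lt_irrefl 0 this
  have hrep := Polynomial.eq_X_add_C_of_degree_le_one h2
  rw [hrep] at he0 he1 ⊢
  simp at he0 he1
  rw [he0] at he1 ⊢
  simp at he1 ⊢
  exact he1

/-- Let `m ≥ 2`, let `H` be the space of polynomials of degree at most `m`
vanishing at `0` and `1` with the L² inner product, and let `x_0, …, x_{m−2}` be `m−1`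
pairwise distinct points of `(0,1)`. If `ψ_i ∈ H` is the Riesz representer of the
functional `y ↦ y''(x_i)`, i.e. `∫₀¹ y ψ_i = y''(x_i)` for all `y ∈ H`, then
`ψ_0, …, ψ_{m−2}` form a basis of `H` (a complete system in `H`). -/
theorem stmt_8 (m : ℕ) (hm : 2 ≤ m)
    (x : Fin (m - 1) → ℝ) (hinj : Function.Injective x)
    (hmem : ∀ i, x i ∈ Set.Ioo (0:ℝ) 1)
    (ψ : Fin (m - 1) → Polynomial ℝ)
    (hψmem : ∀ i, ψ i ∈ bratuSpace m)
    (hψ : ∀ i, ∀ y ∈ bratuSpace m,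
      (∫ s in (0:ℝ)..1, y.eval s * (ψ i).eval s) =
        (Polynomial.derivative (Polynomial.derivative y)).eval (x i)) :
    LinearIndependent ℝ ψ ∧ Submodule.span ℝ (Set.range ψ) = bratuSpace m := by
  -- Linear independence
  have hind : LinearIndependent ℝ ψ := by
    rw [Fintype.linearIndependent_iff]
    intro c hc i
    obtain ⟨y, hyH, hzero, hne⟩ := exists_bump m hm x hinj i
    have key : (∫ s in (0:ℝ)..1, y.eval s * (∑ j, c j • ψ j).eval s)
        = ∑ j, c j * eval (x j) (derivative (derivative y)) := by
      have heq : ∀ s : ℝ, y.eval s * (∑ j, c j • ψ j).eval s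
          = ∑ j, c j * (y.eval s * (ψ j).eval s) := by
        intro s
        rw [Polynomial.eval_finset_sum, Finset.mul_sum]
        refine Finset.sum_congr rfl ?_
        intro j _
        simp [smul_eq_mul]
        ring
      simp_rw [heq]
      rw [intervalIntegral.integral_finset_sum]
      · refine Finset.sum_congr rfl ?_
        intro j _
        rw [intervalIntegral.integral_const_mul, hψ j y hyH]
      · intro j _
        apply Continuous.intervalIntegrable
        exact continuous_const.mul ((Polynomial.continuous y).mul (Polynomial.continuous (ψ j)))
    rw [hc] at key
    simp only [Polynomial.eval_zero, mul_zero, intervalIntegral.integral_zero] at key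
    have hsum : ∑ j, c j * eval (x j) (derivative (derivative y))
        = c i * eval (x i) (derivative (derivative y)) := by
      apply Finset.sum_eq_single
      · intro j _ hj
        rw [hzero j hj, mul_zero]
      · intro h
        exact absurd (Finset.mem_univ i) h
    rw [hsum] at key
    rcases mul_eq_zero.mp key.symm with h | h
    · exact h
    · exact absurd h hne
  refine ⟨hind, ?_⟩
  -- The linear map T : H → ℝ^{m-1}, y ↦ (y''(x_i))_i
  let T : bratuSpace m →ₗ[ℝ] (Fin (m-1) → ℝ) :=
    { toFun := fun y i => eval (x i) (derivative (derivative y.1))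
      map_add' := by intro a b; funext i; simp
      map_smul' := by intro r a; funext i; simp }
  have hker : ∀ a : bratuSpace m, T a = 0 → a = 0 := by
    intro a ha
    have h := bratu_eq_zero m hm x hinj a.1 a.2 (fun i => congrFun ha i)
    exact Subtype.ext h
  have hTinj : Function.Injective T :=
    LinearMap.ker_eq_bot.mp (LinearMap.ker_eq_bot'.mpr hker)
  have hFD : FiniteDimensional ℝ (bratuSpace m) :=
    FiniteDimensional.of_injective T hTinj
  have hle : Module.finrank ℝ (bratuSpace m) ≤ m - 1 := by
    have := LinearMap.finrank_le_finrank_of_injective hTinj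
    simpa using this
  -- the family inside H
  let ψ' : Fin (m-1) → bratuSpace m := fun i => ⟨ψ i, hψmem i⟩
  have hind' : LinearIndependent ℝ ψ' :=
    LinearIndependent.of_comp ((bratuSpace m).subtype) hind
  have hge : m - 1 ≤ Module.finrank ℝ (bratuSpace m) := by
    have := hind'.fintype_card_le_finrank
    simpa using this
  have hcard : Fintype.card (Fin (m-1)) = Module.finrank ℝ (bratuSpace m) := by
    simp
    omega
  have : Nonempty (Fin (m-1)) := ⟨⟨0, by omega⟩⟩
  have hspan : Submodule.span ℝ (Set.range ψ') = ⊤ :=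
    hind'.span_eq_top_of_card_eq_finrank hcard
  have hmap : Submodule.span ℝ (Set.range ψ)
      = Submodule.map (bratuSpace m).subtype (Submodule.span ℝ (Set.range ψ')) := by
    rw [Submodule.map_span]
    congr 1
    rw [← Set.range_comp]
    rfl
  rw [hmap, hspan, Submodule.map_subtype_top]
end

section
/- Let m ≥ 2, let H be the space of real polynomials of degree at most m vanishing at 0 and 1 with the L² inner product ⟨f,g⟩ = ∫₀¹ f(x) g(x) dx, let x_0, …, x_{m−2} be m−1 pairwise distinct points in (0,1), and for each k let ψ_k ∈ H be the Riesz representer of y ↦ y''(x_k). Let ψ̄_i = Σ_{k=0}^{i} β_{ik} ψ_k (i = 0, …, m−2) be an orthonormal basis of H obtained by Gram–Schmidt orthonormalization of ψ_0, …, ψ_{m−2}, with real coefficients β_{ik}. If g : [0,1] × ℝ → ℝ and y ∈ H satisfies y''(x) = g(x, y(x)) for all x ∈ [0,1], then y(x) = Σ_{i=0}^{m−2} Σ_{k=0}^{i} β_{ik} g(x_k, y(x_k)) ψ̄_i(x) for all x ∈ [0,1]. -/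
/-!
Write `y = Σ_i c_i ψ̄_i` in the orthonormal basis, so that `c_i = ⟨y, ψ̄_i⟩`.
Expanding `ψ̄_i = Σ_{k ≤ i} β_{ik} ψ_k` and using that `ψ_k` represents `y ↦ y''(x_k)`
gives `c_i = Σ_{k ≤ i} β_{ik} y''(x_k)`, and the differential equation at the
collocation points turns `y''(x_k)` into `g(x_k, y(x_k))`.
-/

open Polynomial

theorem LinearMap.BilinForm.apply_sum_smul_of_orthonormal {R M ι : Type*} [CommRing R]
    [AddCommGroup M] [Module R M] [Fintype ι] [DecidableEq ι] (B : LinearMap.BilinForm R M)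
    {e : ι → M} (he : ∀ i j, B (e i) (e j) = if i = j then 1 else 0) (c : ι → R) (i : ι) :
    B (∑ j, c j • e j) (e i) = c i := by
  simp [map_sum, he]

namespace Polynomial

theorem intervalIntegrable_eval_mul_eval (p q : ℝ[X]) (a b : ℝ) :
    IntervalIntegrable (fun s => p.eval s * q.eval s) MeasureTheory.volume a b :=
  (p.continuous.mul q.continuous).intervalIntegrable a b

noncomputable def intervalL2Pairing (a b : ℝ) : LinearMap.BilinForm ℝ ℝ[X] :=
  LinearMap.mk₂ ℝ (fun p q => ∫ s in a..b, p.eval s * q.eval s)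
    (fun p p' q => by
      simp only [eval_add, add_mul]
      exact intervalIntegral.integral_add (intervalIntegrable_eval_mul_eval p q a b)
        (intervalIntegrable_eval_mul_eval p' q a b))
    (fun r p q => by
      simp only [eval_smul, smul_eq_mul, mul_assoc]
      exact intervalIntegral.integral_const_mul r _)
    (fun p q q' => by
      simp only [eval_add, mul_add]
      exact intervalIntegral.integral_add (intervalIntegrable_eval_mul_eval p q a b)
        (intervalIntegrable_eval_mul_eval p q' a b))
    (fun r p q => by
      simp only [eval_smul, smul_eq_mul, mul_left_comm _ r]
      exact intervalIntegral.integral_const_mul r _)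

@[simp]
theorem intervalL2Pairing_apply (a b : ℝ) (p q : ℝ[X]) :
    intervalL2Pairing a b p q = ∫ s in a..b, p.eval s * q.eval s :=
  rfl

end Polynomial

theorem stmt_9_general (m : ℕ)
    (x : Fin (m - 1) → ℝ)
    (hmem : ∀ i, x i ∈ Set.Ioo (0:ℝ) 1)
    (ψ : Fin (m - 1) → Polynomial ℝ)
    (hψ : ∀ k, ∀ y ∈ bratuSpace m,
      (∫ s in (0:ℝ)..1, y.eval s * (ψ k).eval s) =
        (Polynomial.derivative (Polynomial.derivative y)).eval (x k))
    (β : Fin (m - 1) → Fin (m - 1) → ℝ)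
    (ψbar : Fin (m - 1) → Polynomial ℝ)
    (hbar : ∀ i, ψbar i = ∑ k ∈ Finset.Iic i, β i k • ψ k)
    (horth : ∀ i j, (∫ s in (0:ℝ)..1, (ψbar i).eval s * (ψbar j).eval s) =
      if i = j then 1 else 0)
    (hspan : ∀ y ∈ bratuSpace m, y ∈ Submodule.span ℝ (Set.range ψbar))
    (g : ℝ → ℝ → ℝ) (y : Polynomial ℝ) (hy : y ∈ bratuSpace m)
    (hode : ∀ t ∈ Set.Icc (0:ℝ) 1,
      (Polynomial.derivative (Polynomial.derivative y)).eval t = g t (y.eval t)) :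
    ∀ t ∈ Set.Icc (0:ℝ) 1,
      y.eval t = ∑ i, ∑ k ∈ Finset.Iic i,
        β i k * g (x k) (y.eval (x k)) * (ψbar i).eval t := by
  set B := intervalL2Pairing 0 1
  obtain ⟨c, hyc⟩ := (Submodule.mem_span_range_iff_exists_fun ℝ).mp (hspan y hy)
  have hc : ∀ i, c i = ∑ k ∈ Finset.Iic i, β i k * g (x k) (y.eval (x k)) := fun i => by
    calc c i = B y (ψbar i) := by
          rw [← hyc, B.apply_sum_smul_of_orthonormal horth]
      _ = ∑ k ∈ Finset.Iic i, β i k * B y (ψ k) := by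
          simp only [hbar i, map_sum, map_smul, smul_eq_mul]
      _ = _ := Finset.sum_congr rfl fun k _ => by
          rw [intervalL2Pairing_apply, hψ k y hy, hode _ (Set.Ioo_subset_Icc_self (hmem k))]
  intro t _
  conv_lhs => rw [← hyc]
  simp only [eval_finsetSum, eval_smul, smul_eq_mul, hc, Finset.sum_mul]

/-- With `H` the space of polynomials of degree at most `m` vanishing at
`0` and `1`, `x_0, …, x_{m−2}` distinct points of `(0,1)`, `ψ_k ∈ H` the Riesz
representer of `y ↦ y''(x_k)`, and `ψ̄_i = Σ_{k≤i} β_{ik} ψ_k` an orthonormal basis of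
`H` obtained by Gram–Schmidt, if `y ∈ H` satisfies `y''(x) = g(x, y(x))` on `[0,1]`,
then `y(x) = Σ_{i} Σ_{k≤i} β_{ik} g(x_k, y(x_k)) ψ̄_i(x)` on `[0,1]`. -/
theorem stmt_9 (m : ℕ) (hm : 2 ≤ m)
    (x : Fin (m - 1) → ℝ) (hinj : Function.Injective x)
    (hmem : ∀ i, x i ∈ Set.Ioo (0:ℝ) 1)
    (ψ : Fin (m - 1) → Polynomial ℝ)
    (hψmem : ∀ k, ψ k ∈ bratuSpace m)
    (hψ : ∀ k, ∀ y ∈ bratuSpace m,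
      (∫ s in (0:ℝ)..1, y.eval s * (ψ k).eval s) =
        (Polynomial.derivative (Polynomial.derivative y)).eval (x k))
    (β : Fin (m - 1) → Fin (m - 1) → ℝ)
    (ψbar : Fin (m - 1) → Polynomial ℝ)
    (hbar : ∀ i, ψbar i = ∑ k ∈ Finset.Iic i, β i k • ψ k)
    (horth : ∀ i j, (∫ s in (0:ℝ)..1, (ψbar i).eval s * (ψbar j).eval s) =
      if i = j then 1 else 0)
    (hspan : ∀ y ∈ bratuSpace m, y ∈ Submodule.span ℝ (Set.range ψbar))
    (g : ℝ → ℝ → ℝ) (y : Polynomial ℝ) (hy : y ∈ bratuSpace m)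
    (hode : ∀ t ∈ Set.Icc (0:ℝ) 1,
      (Polynomial.derivative (Polynomial.derivative y)).eval t = g t (y.eval t)) :
    ∀ t ∈ Set.Icc (0:ℝ) 1,
      y.eval t = ∑ i, ∑ k ∈ Finset.Iic i,
        β i k * g (x k) (y.eval (x k)) * (ψbar i).eval t :=
  stmt_9_general m x hmem ψ hψ β ψbar hbar horth hspan g y hy hode
end

section
/- Let n be a positive integer, let n − 1 < α < n, let X > 0 and let y : [0,X] → ℝ be n times continuously differentiable. Then for every x ∈ [0,X], J^α(ᶜD^α y)(x) = y(x) − Σ_{k=0}^{n−1} y^{(k)}(0) x^k / k!; explicitly, (1/Γ(α)) ∫₀ˣ (x − s)^{α−1} [ (1/Γ(n−α)) ∫₀ˢ (s − r)^{n−α−1} y^{(n)}(r) dr ] ds = y(x) − Σ_{k=0}^{n−1} y^{(k)}(0) x^k / k!. -/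
/-!
The Caputo derivative is `ᶜD^α y = J^(n-α) y⁽ⁿ⁾`. Exchanging the order of integration over the
triangle `0 < r < s < x` and evaluating the inner Beta integral gives the semigroup law
`J^a (J^b g) = J^(a+b) g`, so the left-hand side is
`J^n y⁽ⁿ⁾ (x) = 1/(n-1)! ∫₀ˣ (x - r)^(n-1) y⁽ⁿ⁾(r) dr`, the integral remainder of the Taylor
expansion of `y` at `0`.
-/

open Real MeasureTheory intervalIntegral Set
open scoped Nat

/-- The Riemann–Liouville integral `J^a g (x)`. -/
noncomputable def rlIntegral (a : ℝ) (g : ℝ → ℝ) (x : ℝ) : ℝ :=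
  1 / Gamma a * ∫ s in (0 : ℝ)..x, (x - s) ^ (a - 1) * g s

theorem integral_sub_rpow_mul_sub_rpow {a b c d : ℝ} (ha : 0 < a) (hb : 0 < b) (hcd : c < d) :
    ∫ s in c..d, (d - s) ^ (a - 1) * (s - c) ^ (b - 1) =
      (d - c) ^ (a + b - 1) * (Gamma a * Gamma b / Gamma (a + b)) := by
  have hdc : 0 < d - c := sub_pos.mpr hcd
  have hshift : ∫ s in c..d, (d - s) ^ (a - 1) * (s - c) ^ (b - 1) =
      ∫ u in (0 : ℝ)..(d - c), u ^ (b - 1) * (d - c - u) ^ (a - 1) := by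
    rw [← sub_self c, ← intervalIntegral.integral_comp_sub_right]
    refine integral_congr fun s _ => ?_
    ring_nf
  have hcomplex : ((∫ u in (0 : ℝ)..(d - c), u ^ (b - 1) * (d - c - u) ^ (a - 1) : ℝ) : ℂ) =
      ∫ u in (0 : ℝ)..(d - c), (u : ℂ) ^ ((b : ℂ) - 1) * ((d - c : ℝ) - u : ℂ) ^ ((a : ℂ) - 1) := by
    rw [← integral_ofReal]
    refine integral_congr fun u hu => ?_
    rw [uIcc_of_le hdc.le] at hu
    simp only [Complex.ofReal_mul]
    rw [Complex.ofReal_cpow hu.1, Complex.ofReal_cpow (by linarith [hu.2] : (0 : ℝ) ≤ d - c - u)]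
    push_cast
    ring_nf
  have hbeta : Complex.betaIntegral b a = (Gamma a * Gamma b / Gamma (a + b) : ℝ) := by
    have hGamma := Complex.Gamma_mul_Gamma_eq_betaIntegral (s := b) (t := a)
      (by simpa using hb) (by simpa using ha)
    rw [show (b : ℂ) + a = (a + b : ℝ) by push_cast; ring, Complex.Gamma_ofReal,
      Complex.Gamma_ofReal, Complex.Gamma_ofReal] at hGamma
    have hne : (Gamma (a + b) : ℂ) ≠ 0 := by
      exact_mod_cast (Gamma_pos_of_pos (by linarith : 0 < a + b)).ne'
    push_cast
    rw [eq_div_iff hne]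
    linear_combination -hGamma
  rw [← Complex.ofReal_inj, hshift, hcomplex, Complex.betaIntegral_scaled b a hdc, hbeta,
    Complex.ofReal_mul, Complex.ofReal_cpow hdc.le]
  push_cast
  ring_nf

theorem intervalIntegrable_sub_rpow {b : ℝ} (hb : 0 < b) (c s : ℝ) :
    IntervalIntegrable (fun r => (s - r) ^ (b - 1)) volume c s := by
  simpa using
    (intervalIntegrable_rpow' (a := s - c) (b := 0) (by linarith : -1 < b - 1)).comp_sub_left s

theorem integral_sub_rpow {b : ℝ} (hb : 0 < b) (s : ℝ) :
    ∫ r in (0 : ℝ)..s, (s - r) ^ (b - 1) = s ^ b / b := by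
  rw [intervalIntegral.integral_comp_sub_left (fun u => u ^ (b - 1)), sub_self, sub_zero,
    integral_rpow (Or.inl (by linarith)), sub_add_cancel, zero_rpow hb.ne', sub_zero]

theorem setIntegral_Ioc_indicator_Iio {E : Type*} [NormedAddCommGroup E] [NormedSpace ℝ E]
    (f : ℝ → E) {x s : ℝ} (hs : s ∈ Icc 0 x) :
    ∫ r in Ioc 0 x, (Iio s).indicator f r = ∫ r in 0..s, f r := by
  have hinter : Ioc 0 x ∩ Iio s = Ioo 0 s :=
    Set.ext fun r => ⟨fun h => ⟨h.1.1, h.2⟩, fun h => ⟨⟨h.1, h.2.le.trans hs.2⟩, h.2⟩⟩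
  rw [setIntegral_indicator measurableSet_Iio, hinter, integral_of_le hs.1,
    integral_Ioc_eq_integral_Ioo]

theorem setIntegral_Ioc_indicator_Ioi {E : Type*} [NormedAddCommGroup E] [NormedSpace ℝ E]
    (f : ℝ → E) {x r : ℝ} (hr : r ∈ Icc 0 x) :
    ∫ s in Ioc 0 x, (Ioi r).indicator f s = ∫ s in r..x, f s := by
  rw [setIntegral_indicator measurableSet_Ioi, integral_of_le hr.2, Ioc_inter_Ioi,
    max_eq_right hr.1]

theorem integral_integral_swap_triangle {E : Type*} [NormedAddCommGroup E] [NormedSpace ℝ E]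
    {F : ℝ → ℝ → E} {x : ℝ} (hx : 0 ≤ x)
    (hF : Integrable ({p : ℝ × ℝ | p.2 < p.1}.indicator (Function.uncurry F))
      ((volume.restrict (Ioc 0 x)).prod (volume.restrict (Ioc 0 x)))) :
    ∫ s in 0..x, ∫ r in 0..s, F s r = ∫ r in 0..x, ∫ s in r..x, F s r := by
  have hslice : ∀ s r, {p : ℝ × ℝ | p.2 < p.1}.indicator (Function.uncurry F) (s, r) =
      (Iio s).indicator (F s) r ∧
      {p : ℝ × ℝ | p.2 < p.1}.indicator (Function.uncurry F) (s, r) =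
      (Ioi r).indicator (F · r) s := by
    intro s r
    by_cases h : r < s <;> simp [h]
  rw [integral_of_le hx, integral_of_le hx]
  calc ∫ s in Ioc 0 x, ∫ r in 0..s, F s r
      = ∫ s in Ioc 0 x, ∫ r in Ioc 0 x,
          {p : ℝ × ℝ | p.2 < p.1}.indicator (Function.uncurry F) (s, r) := by
        refine setIntegral_congr_fun measurableSet_Ioc fun s hs => ?_
        simp only [(hslice s _).1, setIntegral_Ioc_indicator_Iio _ (Ioc_subset_Icc_self hs)]
    _ = ∫ r in Ioc 0 x, ∫ s in Ioc 0 x,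
          {p : ℝ × ℝ | p.2 < p.1}.indicator (Function.uncurry F) (s, r) :=
        integral_integral_swap hF
    _ = ∫ r in Ioc 0 x, ∫ s in r..x, F s r := by
        refine setIntegral_congr_fun measurableSet_Ioc fun r hr => ?_
        simp only [(hslice _ r).2, setIntegral_Ioc_indicator_Ioi _ (Ioc_subset_Icc_self hr)]

theorem intervalIntegrable_rpow_kernel {a b x s : ℝ} (hb : 0 < b) (hs : s ∈ Icc 0 x)
    {g : ℝ → ℝ} (hg : ContinuousOn g (Icc 0 x)) :
    IntervalIntegrable (fun r => (x - s) ^ (a - 1) * ((s - r) ^ (b - 1) * g r)) volume 0 s :=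
  ((intervalIntegrable_sub_rpow hb 0 s).mul_continuousOn
    (hg.mono (by rw [uIcc_of_le hs.1]; exact Icc_subset_Icc_right hs.2))).const_mul _

theorem integral_norm_rpow_kernel_le {a b x s M : ℝ} (hb : 0 < b) (hs : s ∈ Icc 0 x)
    {g : ℝ → ℝ} (hg : ContinuousOn g (Icc 0 x)) (hM : ∀ r ∈ Icc 0 x, ‖g r‖ ≤ M) :
    ∫ r in 0..s, ‖(x - s) ^ (a - 1) * ((s - r) ^ (b - 1) * g r)‖ ≤
      x ^ b / b * M * (x - s) ^ (a - 1) := by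
  have hxs : 0 ≤ x - s := sub_nonneg.2 hs.2
  have hM0 : 0 ≤ M := (norm_nonneg _).trans (hM s hs)
  calc ∫ r in 0..s, ‖(x - s) ^ (a - 1) * ((s - r) ^ (b - 1) * g r)‖
      ≤ ∫ r in 0..s, (x - s) ^ (a - 1) * ((s - r) ^ (b - 1) * M) := by
        refine integral_mono_on hs.1 (intervalIntegrable_rpow_kernel hb hs hg).norm
          (((intervalIntegrable_sub_rpow hb 0 s).mul_const _).const_mul _) fun r hr => ?_
        have hsr : 0 ≤ s - r := sub_nonneg.2 hr.2
        simp only [norm_mul, norm_of_nonneg (rpow_nonneg hxs _),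
          norm_of_nonneg (rpow_nonneg hsr _)]
        gcongr
        exact hM r ⟨hr.1, hr.2.trans hs.2⟩
    _ = (x - s) ^ (a - 1) * (s ^ b / b * M) := by
        rw [intervalIntegral.integral_const_mul, intervalIntegral.integral_mul_const,
          integral_sub_rpow hb]
    _ ≤ (x - s) ^ (a - 1) * (x ^ b / b * M) := by
        gcongr
        exacts [hs.1, hs.2]
    _ = x ^ b / b * M * (x - s) ^ (a - 1) := mul_comm _ _

theorem integrable_triangle_rpow_kernel {a b x : ℝ} (ha : 0 < a) (hb : 0 < b) {g : ℝ → ℝ}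
    (hg : ContinuousOn g (Icc 0 x)) :
    Integrable ({p : ℝ × ℝ | p.2 < p.1}.indicator
      (Function.uncurry fun s r => (x - s) ^ (a - 1) * ((s - r) ^ (b - 1) * g r)))
      ((volume.restrict (Ioc 0 x)).prod (volume.restrict (Ioc 0 x))) := by
  set μ := volume.restrict (Ioc (0 : ℝ) x)
  set K : ℝ → ℝ → ℝ := fun s r => (x - s) ^ (a - 1) * ((s - r) ^ (b - 1) * g r)
  have hslice : ∀ s r, {p : ℝ × ℝ | p.2 < p.1}.indicator (Function.uncurry K) (s, r) =
      (Iio s).indicator (K s) r := by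
    intro s r
    by_cases h : r < s <;> simp [h]
  have hmeas : AEStronglyMeasurable
      ({p : ℝ × ℝ | p.2 < p.1}.indicator (Function.uncurry K)) (μ.prod μ) := by
    refine AEStronglyMeasurable.indicator ?_ (measurableSet_lt measurable_snd measurable_fst)
    have hg' : AEStronglyMeasurable g μ :=
      (hg.mono Ioc_subset_Icc_self).aestronglyMeasurable measurableSet_Ioc
    exact ((measurable_const.sub measurable_fst).pow_const _).aestronglyMeasurable.mul
      (((measurable_fst.sub measurable_snd).pow_const _).aestronglyMeasurable.mul
        (hg'.comp_quasiMeasurePreserving Measure.quasiMeasurePreserving_snd))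
  obtain ⟨M, hM⟩ := isCompact_Icc.exists_bound_of_continuousOn hg
  rw [integrable_prod_iff hmeas]
  constructor
  · filter_upwards [ae_restrict_mem measurableSet_Ioc] with s hs
    simp only [hslice]
    rw [integrable_indicator_iff measurableSet_Iio, IntegrableOn,
      Measure.restrict_restrict measurableSet_Iio]
    exact (intervalIntegrable_rpow_kernel hb (Ioc_subset_Icc_self hs) hg).1.mono_set
      fun r hr => ⟨hr.2.1, hr.1.le⟩
  · refine Integrable.mono' ((intervalIntegrable_sub_rpow ha 0 x).const_mul (x ^ b / b * M)).1
      hmeas.norm.integral_prod_right' ?_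
    filter_upwards [ae_restrict_mem measurableSet_Ioc] with s hs
    rw [norm_of_nonneg (integral_nonneg fun r => norm_nonneg _)]
    simp only [hslice, norm_indicator_eq_indicator_norm]
    rw [setIntegral_Ioc_indicator_Iio _ (Ioc_subset_Icc_self hs)]
    exact integral_norm_rpow_kernel_le hb (Ioc_subset_Icc_self hs) hg hM

theorem rlIntegral_rlIntegral {a b x : ℝ} (ha : 0 < a) (hb : 0 < b) (hx : 0 ≤ x) {g : ℝ → ℝ}
    (hg : ContinuousOn g (Icc 0 x)) :
    rlIntegral a (rlIntegral b g) x = rlIntegral (a + b) g x := by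
  have hinner : ∀ r ∈ uIoo 0 x, ∫ s in r..x, (x - s) ^ (a - 1) * ((s - r) ^ (b - 1) * g r) =
      Gamma a * Gamma b / Gamma (a + b) * ((x - r) ^ (a + b - 1) * g r) := by
    intro r hr
    rw [uIoo_of_le hx] at hr
    simp only [← mul_assoc]
    rw [intervalIntegral.integral_mul_const, integral_sub_rpow_mul_sub_rpow ha hb hr.2]
    ring
  have hGa := (Gamma_pos_of_pos ha).ne'
  have hGb := (Gamma_pos_of_pos hb).ne'
  calc rlIntegral a (rlIntegral b g) x
      = 1 / Gamma a * (1 / Gamma b) * ∫ s in 0..x, ∫ r in 0..s,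
          (x - s) ^ (a - 1) * ((s - r) ^ (b - 1) * g r) := by
        simp only [rlIntegral, intervalIntegral.integral_const_mul, mul_left_comm _ (1 / Gamma b)]
        ring
    _ = 1 / Gamma a * (1 / Gamma b) * ∫ r in 0..x,
          Gamma a * Gamma b / Gamma (a + b) * ((x - r) ^ (a + b - 1) * g r) := by
        rw [integral_integral_swap_triangle hx (integrable_triangle_rpow_kernel ha hb hg),
          integral_congr_uIoo hinner]
    _ = rlIntegral (a + b) g x := by
        rw [rlIntegral, intervalIntegral.integral_const_mul]
        field_simp

theorem iteratedDerivWithin_Icc_of_lt {f : ℝ → ℝ} (k : ℕ) {a t x X : ℝ} (ht : t < x)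
    (hxX : x ≤ X) :
    iteratedDerivWithin k f (Icc a x) t = iteratedDerivWithin k f (Icc a X) t := by
  have hIcc : Icc a x = Icc a X ∩ Iic x := by
    ext r; simp only [mem_Icc, mem_inter_iff, mem_Iic]; grind
  simp only [iteratedDerivWithin_eq_iteratedFDerivWithin, hIcc,
    iteratedFDerivWithin_inter (Iic_mem_nhds ht)]

theorem rlIntegral_natCast_succ (m : ℕ) (g : ℝ → ℝ) (x : ℝ) :
    rlIntegral (m + 1 : ℕ) g x = 1 / m ! * ∫ s in (0 : ℝ)..x, (x - s) ^ m * g s := by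
  simp only [rlIntegral, Nat.cast_succ, Gamma_nat_eq_factorial, add_sub_cancel_right,
    rpow_natCast]

theorem rlIntegral_iteratedDerivWithin {m : ℕ} {X x : ℝ} {y : ℝ → ℝ}
    (hy : ContDiffOn ℝ (m + 1 : ℕ) y (Icc 0 X)) (hx : x ∈ Icc 0 X) :
    rlIntegral (m + 1 : ℕ) (iteratedDerivWithin (m + 1) y (Icc 0 X)) x =
      y x - ∑ k ∈ Finset.range (m + 1), iteratedDerivWithin k y (Icc 0 X) 0 * x ^ k / k ! := by
  rcases hx.1.eq_or_lt with rfl | hx0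
  · simp [rlIntegral, Finset.sum_range_succ']
  have htaylor := taylor_integral_remainder (x₀ := 0) (hy.mono (by
    rw [uIcc_of_le hx.1]; exact Icc_subset_Icc_right hx.2))
  have hsum : ∑ k ∈ Finset.range (m + 1),
      ((k ! : ℝ)⁻¹ * (x - 0) ^ k) • iteratedDerivWithin k y (uIcc 0 x) 0 =
      ∑ k ∈ Finset.range (m + 1), iteratedDerivWithin k y (Icc 0 X) 0 * x ^ k / k ! := by
    refine Finset.sum_congr rfl fun k _ => ?_
    rw [uIcc_of_le hx.1, iteratedDerivWithin_Icc_of_lt k hx0 hx.2, smul_eq_mul]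
    ring
  have hremainder : ∫ t in (0 : ℝ)..x,
      ((x - t) ^ m / m !) • iteratedDerivWithin (m + 1) y (uIcc 0 x) t =
      rlIntegral (m + 1 : ℕ) (iteratedDerivWithin (m + 1) y (Icc 0 X)) x := by
    rw [rlIntegral_natCast_succ, ← intervalIntegral.integral_const_mul]
    refine integral_congr_uIoo fun t ht => ?_
    rw [uIoo_of_le hx.1] at ht
    rw [uIcc_of_le hx.1, iteratedDerivWithin_Icc_of_lt _ ht.2 hx.2, smul_eq_mul]
    ring
  rw [taylor_within_apply, hsum, hremainder] at htaylor
  rw [← htaylor]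

/-- For `n − 1 < α < n`, `X > 0` and `y` `n` times continuously
differentiable on `[0,X]`, the composition of the Riemann–Liouville integral of order
`α` with the Caputo derivative of order `α` satisfies, for every `x ∈ [0,X]`,
`J^α (ᶜD^α y)(x) = y(x) − Σ_{k=0}^{n−1} y⁽ᵏ⁾(0) xᵏ / k!`. -/
theorem stmt_14 (n : ℕ) (hn : 0 < n) (α X : ℝ)
    (hα1 : (n : ℝ) - 1 < α) (hα2 : α < (n : ℝ)) (hX : 0 < X)
    (y : ℝ → ℝ) (hy : ContDiffOn ℝ n y (Set.Icc 0 X))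
    (x : ℝ) (hx : x ∈ Set.Icc (0:ℝ) X) :
    (1 / Real.Gamma α) * (∫ s in (0:ℝ)..x, (x - s) ^ (α - 1) *
        ((1 / Real.Gamma ((n : ℝ) - α)) * ∫ r in (0:ℝ)..s,
          (s - r) ^ ((n : ℝ) - α - 1) * iteratedDerivWithin n y (Set.Icc 0 X) r)) =
      y x - ∑ k ∈ Finset.range n,
        iteratedDerivWithin k y (Set.Icc 0 X) 0 * x ^ k / (k.factorial : ℝ) := by
  obtain ⟨m, rfl⟩ := Nat.exists_eq_add_one_of_ne_zero hn.ne'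
  have hα : 0 < α := by
    push_cast at hα1
    linarith [m.cast_nonneg (α := ℝ)]
  have hD : ContinuousOn (iteratedDerivWithin (m + 1) y (Icc 0 X)) (Icc 0 x) :=
    (hy.continuousOn_iteratedDerivWithin le_rfl (uniqueDiffOn_Icc hX)).mono
      (Icc_subset_Icc_right hx.2)
  calc rlIntegral α (rlIntegral ((m + 1 : ℕ) - α) (iteratedDerivWithin (m + 1) y (Icc 0 X))) x
      = rlIntegral (m + 1 : ℕ) (iteratedDerivWithin (m + 1) y (Icc 0 X)) x := by
        rw [rlIntegral_rlIntegral hα (sub_pos.2 hα2) hx.1 hD, add_sub_cancel]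
    _ = _ := rlIntegral_iteratedDerivWithin hy hx
end

section
/- Let 1 < α < 2, X > 0, and let y be a real polynomial. Define u(x) = (1/Γ(α)) ∫₀ˣ (x − r)^{α−1} y(r) dr for x ∈ [0,X]. Then u is twice differentiable on (0,X], and for every x ∈ (0,X], the Caputo derivative of u of order α recovers y: (1/Γ(2−α)) ∫₀ˣ (x − r)^{1−α} u''(r) dr = y(x). -/
/-!
The Riemann–Liouville integral `J^a` sends `x ^ b / Γ(b + 1)` to `x ^ (a + b) / Γ(a + b + 1)`
(a Beta integral), and differentiation sends `x ^ t / Γ(t + 1)` to `x ^ (t - 1) / Γ t`. Expanding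
`y` into monomials, `u = J^α y` is the termwise series with exponent shift `α`, `u''` the one with
shift `α - 2`, and `J^(2 - α)` brings the shift back to `0`, that is, to `y`.
-/

open MeasureTheory Real Finset
open scoped Polynomial Nat Topology

theorem integral_sub_rpow_mul_rpow {a b x : ℝ} (ha : 0 < a) (hb : 0 < b) (hx : 0 < x) :
    ∫ r in (0:ℝ)..x, (x - r) ^ (a - 1) * r ^ (b - 1) =
      Gamma a * Gamma b / Gamma (a + b) * x ^ (a + b - 1) := by
  have hbeta := Complex.betaIntegral_scaled b a hx
  rw [Complex.betaIntegral_eq_Gamma_mul_div _ _ (by simpa) (by simpa)] at hbeta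
  apply Complex.ofReal_injective
  rw [← intervalIntegral.integral_ofReal]
  convert hbeta using 1
  · refine intervalIntegral.integral_congr fun r hr => ?_
    rw [Set.uIcc_of_le hx.le] at hr
    push_cast [Complex.ofReal_cpow (sub_nonneg.2 hr.2), Complex.ofReal_cpow hr.1]
    ring
  · push_cast [← Complex.ofReal_add, Complex.Gamma_ofReal, Complex.ofReal_cpow hx.le]
    ring_nf

theorem intervalIntegrable_sub_rpow_mul_rpow {a b x : ℝ} (ha : 0 < a) (hb : 0 < b) (hx : 0 < x) :
    IntervalIntegrable (fun r => (x - r) ^ (a - 1) * r ^ (b - 1)) volume 0 x := by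
  refine intervalIntegral.intervalIntegrable_of_integral_ne_zero ?_
  rw [integral_sub_rpow_mul_rpow ha hb hx]
  have := Gamma_pos_of_pos ha
  have := Gamma_pos_of_pos hb
  have := Gamma_pos_of_pos (add_pos ha hb)
  positivity

theorem integral_sub_rpow_mul_rpow_div_Gamma {a b x : ℝ} (ha : 0 < a) (hb : -1 < b)
    (hx : 0 < x) :
    (Gamma a)⁻¹ * ∫ r in (0:ℝ)..x, (x - r) ^ (a - 1) * (r ^ b / Gamma (b + 1)) =
      x ^ (a + b) / Gamma (a + b + 1) := by
  have hb1 : 0 < b + 1 := by linarith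
  have h := integral_sub_rpow_mul_rpow ha hb1 hx
  rw [add_sub_cancel_right, ← add_assoc, add_sub_cancel_right] at h
  simp_rw [← mul_div_assoc, intervalIntegral.integral_div, h]
  have := (Gamma_pos_of_pos ha).ne'
  have := (Gamma_pos_of_pos hb1).ne'
  field_simp

-- At `t = 0` this holds through the conventions `Γ 0 = 0` and `0⁻¹ = 0`.
theorem div_Gamma_add_one (t : ℝ) : t / Gamma (t + 1) = (Gamma t)⁻¹ := by
  rcases eq_or_ne t 0 with rfl | ht
  · simp
  · rw [Gamma_add_one ht, div_mul_cancel_left₀ ht]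

theorem hasDerivAt_rpow_div_Gamma {x : ℝ} (hx : 0 < x) (t : ℝ) :
    HasDerivAt (fun z => z ^ t / Gamma (t + 1)) (x ^ (t - 1) / Gamma t) x := by
  refine ((hasDerivAt_rpow_const (Or.inl hx.ne')).div_const (Gamma (t + 1))).congr_deriv ?_
  rw [mul_comm, mul_div_assoc, div_Gamma_add_one, div_eq_mul_inv]

/-- For `s > 0` and `x > 0` this is the Riemann–Liouville integral `J^s y (x)`, written
termwise so that it makes sense for every real `s`. -/
noncomputable def fracIntegralPoly (y : ℝ[X]) (s x : ℝ) : ℝ :=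
  ∑ n ∈ range (y.natDegree + 1),
    y.coeff n * n ! * (x ^ ((n : ℝ) + s) / Gamma ((n : ℝ) + s + 1))

theorem fracIntegralPoly_zero (y : ℝ[X]) (x : ℝ) : fracIntegralPoly y 0 x = y.eval x := by
  rw [fracIntegralPoly, Polynomial.eval_eq_sum_range]
  refine sum_congr rfl fun n _ => ?_
  rw [add_zero, Gamma_nat_eq_factorial, rpow_natCast]
  have : (n ! : ℝ) ≠ 0 := by positivity
  field_simp

theorem hasDerivAt_fracIntegralPoly (y : ℝ[X]) (s : ℝ) {x : ℝ} (hx : 0 < x) :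
    HasDerivAt (fracIntegralPoly y s) (fracIntegralPoly y (s - 1) x) x := by
  unfold fracIntegralPoly
  refine (HasDerivAt.fun_sum fun (n : ℕ) _ =>
    (hasDerivAt_rpow_div_Gamma hx ((n : ℝ) + s)).const_mul (y.coeff n * n !)).congr_deriv ?_
  refine sum_congr rfl fun n _ => ?_
  rw [← add_sub_assoc, sub_add_cancel]

theorem fracIntegral_fracIntegralPoly (y : ℝ[X]) {a s x : ℝ} (ha : 0 < a) (hs : -1 < s)
    (hx : 0 < x) :
    (Gamma a)⁻¹ * ∫ r in (0:ℝ)..x, (x - r) ^ (a - 1) * fracIntegralPoly y s r =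
      fracIntegralPoly y (s + a) x := by
  have hexp : ∀ n : ℕ, -1 < (n : ℝ) + s := fun n => by linarith [n.cast_nonneg (α := ℝ)]
  simp_rw [fracIntegralPoly, mul_sum, mul_left_comm ((x - _) ^ (a - 1))]
  rw [intervalIntegral.integral_finsetSum, mul_sum]
  · refine sum_congr rfl fun n _ => ?_
    rw [intervalIntegral.integral_const_mul, mul_left_comm,
      integral_sub_rpow_mul_rpow_div_Gamma ha (hexp n) hx]
    ring_nf
  · intro n _
    have h := intervalIntegrable_sub_rpow_mul_rpow ha (by linarith [hexp n] : 0 < (n : ℝ) + s + 1)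
      hx
    simp_rw [add_sub_cancel_right] at h
    simpa only [mul_div_assoc] using (h.div_const (Gamma _)).const_mul (y.coeff n * n !)

theorem stmt_15_general (α X : ℝ) (hα1 : 1 < α) (hα2 : α < 2)
    (y : Polynomial ℝ) (u : ℝ → ℝ)
    (hu : ∀ x : ℝ, u x = (1 / Real.Gamma α) *
      ∫ r in (0:ℝ)..x, (x - r) ^ (α - 1) * y.eval r) :
    ∃ u' u'' : ℝ → ℝ,
      (∀ x ∈ Set.Ioc (0:ℝ) X, HasDerivAt u (u' x) x ∧ HasDerivAt u' (u'' x) x) ∧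
      (∀ x ∈ Set.Ioc (0:ℝ) X,
        (1 / Real.Gamma (2 - α)) *
          (∫ r in (0:ℝ)..x, (x - r) ^ (1 - α) * u'' r) = y.eval x) := by
  have hu_eq : ∀ x, 0 < x → u x = fracIntegralPoly y α x := fun x hx => by
    have h := fracIntegral_fracIntegralPoly y (a := α) (s := 0) (by linarith) (by norm_num) hx
    simp only [fracIntegralPoly_zero, zero_add] at h
    rw [hu x, one_div, h]
  refine ⟨fracIntegralPoly y (α - 1), fracIntegralPoly y (α - 2), fun x hx => ⟨?_, ?_⟩,
    fun x hx => ?_⟩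
  · have hu_nhds : u =ᶠ[𝓝 x] fracIntegralPoly y α :=
      Filter.eventually_of_mem (Ioi_mem_nhds hx.1) hu_eq
    exact (hasDerivAt_fracIntegralPoly y α hx.1).congr_of_eventuallyEq hu_nhds
  · have h := hasDerivAt_fracIntegralPoly y (α - 1) hx.1
    rwa [sub_sub, one_add_one_eq_two] at h
  · have h := fracIntegral_fracIntegralPoly y (a := 2 - α) (s := α - 2) (by linarith)
      (by linarith) hx.1
    rwa [show 2 - α - 1 = 1 - α by ring, sub_add_sub_cancel', sub_self, fracIntegralPoly_zero,
      ← one_div] at h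

/-- Let `1 < α < 2`, `X > 0` and let `y` be a real polynomial. Define
`u(x) = (1/Γ(α)) ∫₀ˣ (x − r)^{α−1} y(r) dr`. Then `u` is twice differentiable on
`(0,X]` and the Caputo derivative of order `α` of `u` recovers `y` there:
`(1/Γ(2−α)) ∫₀ˣ (x − r)^{1−α} u''(r) dr = y(x)` for all `x ∈ (0,X]`. -/
theorem stmt_15 (α X : ℝ) (hα1 : 1 < α) (hα2 : α < 2) (hX : 0 < X)
    (y : Polynomial ℝ) (u : ℝ → ℝ)
    (hu : ∀ x : ℝ, u x = (1 / Real.Gamma α) *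
      ∫ r in (0:ℝ)..x, (x - r) ^ (α - 1) * y.eval r) :
    ∃ u' u'' : ℝ → ℝ,
      (∀ x ∈ Set.Ioc (0:ℝ) X, HasDerivAt u (u' x) x ∧ HasDerivAt u' (u'' x) x) ∧
      (∀ x ∈ Set.Ioc (0:ℝ) X,
        (1 / Real.Gamma (2 - α)) *
          (∫ r in (0:ℝ)..x, (x - r) ^ (1 - α) * u'' r) = y.eval x) :=
  stmt_15_general α X hα1 hα2 y u hu
end
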